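/- Every internal set [A_ε] ⊆ ρR̃ⁿ is closed in the sharp topology, and every strongly internal set ⟨A_ε⟩ ⊆ ρR̃ⁿ is open in the sharp topology. Moreover [A_ε] = [cl(A_ε)] and ⟨A_ε⟩ = ⟨int(A_ε)⟩. -/

import Mathlib

open MeasureTheory

namespace HFT

noncomputable section

/-- The index set `I = (0,1]`. -/
abbrev Idx : Type := {e : ℝ // 0 < e ∧ e ≤ 1}

/-- "For ε small": the property holds for all sufficiently small indices. -/
def Ev (P : Idx → Prop) : Prop := ∃ e0 : Idx, ∀ e : Idx, e.1 ≤ e0.1 → P e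

/-- A gauge: a net `ρ : I → (0,1]` tending to `0` as `ε → 0⁺`. -/
structure Gauge where
  ρ : Idx → ℝ
  pos : ∀ e, 0 < ρ e
  le_one : ∀ e, ρ e ≤ 1
  to_zero : ∀ δ : ℝ, 0 < δ → Ev fun e => ρ e < δ

variable (g : Gauge)

/-- A net of reals is ρ-moderate. -/
def ModerateR (x : Idx → ℝ) : Prop := ∃ N : ℕ, Ev fun e => |x e| ≤ (g.ρ e)⁻¹ ^ N

/-- Two real nets are ρ-equivalent: they define the same generalized number. -/
def EquivR (x y : Idx → ℝ) : Prop := ∀ m : ℕ, Ev fun e => |x e - y e| ≤ g.ρ e ^ m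

/-- ρ-negligible net. -/
def NegligibleR (x : Idx → ℝ) : Prop := EquivR g x fun _ => 0

/-- Order of the Robinson–Colombeau ring at the level of representatives. -/
def leR (x y : Idx → ℝ) : Prop :=
  ∃ z, NegligibleR g z ∧ Ev fun e => x e ≤ y e + z e

/-- Invertibility in the Robinson–Colombeau ring, at the level of representatives. -/
def InvR (x : Idx → ℝ) : Prop :=
  ∃ y, ModerateR g y ∧ EquivR g (fun e => x e * y e) fun _ => 1

/-- Strict order: `x < y` iff `x ≤ y` and `y − x` is invertible. -/
def ltR (x y : Idx → ℝ) : Prop := leR g x y ∧ InvR g fun e => y e - x e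

/-- `x > 0`: positive and invertible. -/
def PosInvR (x : Idx → ℝ) : Prop := ltR g (fun _ => 0) x

/-- Constant net. -/
def cR (c : ℝ) : Idx → ℝ := fun _ => c

/-- Positive infinite generalized number. -/
def InfiniteR (k : Idx → ℝ) : Prop := ∀ r : ℝ, 0 < r → leR g (cR r) k

/-- Strong infinite number: `|k| ≥ dρ^{−s}` for some real `s > 0`. -/
def StrongInfiniteR (k : Idx → ℝ) : Prop :=
  ∃ s : ℝ, 0 < s ∧ Ev fun e => g.ρ e ^ (-s) ≤ |k e|

def dRhoPow (m : ℕ) : Idx → ℝ := fun e => g.ρ e ^ m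
def dRhoNegPow (m : ℕ) : Idx → ℝ := fun e => (g.ρ e)⁻¹ ^ m

/-- Moderate complex nets. -/
def ModerateC (x : Idx → ℂ) : Prop := ModerateR g fun e => ‖x e‖

/-- Equivalent complex nets. -/
def EquivC (x y : Idx → ℂ) : Prop :=
  ∀ m : ℕ, Ev fun e => ‖x e - y e‖ ≤ g.ρ e ^ m

/- Subpoints: co-final subsets of the index set and relativized notions. -/

/-- `L ⊆ I` is co-final: `0` is an accumulation point of `L`. -/
def CoFinal (L : Set Idx) : Prop := ∀ δ : ℝ, 0 < δ → ∃ e ∈ L, e.1 < δ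

def EvOn (L : Set Idx) (P : Idx → Prop) : Prop :=
  ∃ e0 : Idx, ∀ e ∈ L, e.1 ≤ e0.1 → P e

def ModerateROn (L : Set Idx) (x : Idx → ℝ) : Prop :=
  ∃ N : ℕ, EvOn L fun e => |x e| ≤ (g.ρ e)⁻¹ ^ N

def EquivROn (L : Set Idx) (x y : Idx → ℝ) : Prop :=
  ∀ m : ℕ, EvOn L fun e => |x e - y e| ≤ g.ρ e ^ m

def NegligibleROn (L : Set Idx) (x : Idx → ℝ) : Prop := EquivROn g L x fun _ => 0

def leROn (L : Set Idx) (x y : Idx → ℝ) : Prop :=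
  ∃ z, NegligibleROn g L z ∧ EvOn L fun e => x e ≤ y e + z e

def InvROn (L : Set Idx) (x : Idx → ℝ) : Prop :=
  ∃ y, ModerateROn g L y ∧ EquivROn g L (fun e => x e * y e) fun _ => 1

def ltROn (L : Set Idx) (x y : Idx → ℝ) : Prop :=
  leROn g L x y ∧ InvROn g L fun e => y e - x e

/- Vector-valued generalized points. -/

abbrev En (n : ℕ) : Type := EuclideanSpace ℝ (Fin n)

def ModerateV {n : ℕ} (x : Idx → En n) : Prop := ModerateR g fun e => ‖x e‖

def EquivV {n : ℕ} (x y : Idx → En n) : Prop :=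
  ∀ m : ℕ, Ev fun e => ‖x e - y e‖ ≤ g.ρ e ^ m

def distNet {n : ℕ} (x y : Idx → En n) : Idx → ℝ := fun e => ‖x e - y e‖
def normNet {n : ℕ} (x : Idx → En n) : Idx → ℝ := fun e => ‖x e‖
def coord {n : ℕ} (x : Idx → En n) (i : Fin n) : Idx → ℝ := fun e => x e i

/-- Membership in the internal set generated by a net of subsets of `ℝⁿ`. -/
def MemInternal {n : ℕ} (A : Idx → Set (En n)) (x : Idx → En n) : Prop :=
  ∃ x', EquivV g x x' ∧ Ev fun e => x' e ∈ A e

/-- Strong membership: every representative is eventually in `A_ε`. -/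
def StrongMem {n : ℕ} (A : Idx → Set (En n)) (x : Idx → En n) : Prop :=
  ∀ x', EquivV g x x' → Ev fun e => x' e ∈ A e

/-- A (saturated) set of generalized points is open in the sharp topology. -/
def SharpOpen {n : ℕ} (S : Set (Idx → En n)) : Prop :=
  ∀ x, ModerateV g x → x ∈ S →
    ∃ r, PosInvR g r ∧ ∀ y, ModerateV g y → ltR g (distNet y x) r → y ∈ S

/-- Closed in the sharp topology. -/
def SharpClosed {n : ℕ} (S : Set (Idx → En n)) : Prop :=
  ∀ x, ModerateV g x → x ∉ S →
    ∃ r, PosInvR g r ∧ ∀ y, ModerateV g y → ltR g (distNet y x) r → y ∉ S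

/-- Closure in the sharp topology. -/
def SharpClosure {n : ℕ} (S : Set (Idx → En n)) : Set (Idx → En n) :=
  {x | ModerateV g x ∧ ∀ r, PosInvR g r → ∃ y ∈ S, ltR g (distNet y x) r}

/-- Sharply bounded set of generalized points. -/
def SharplyBounded {n : ℕ} (S : Set (Idx → En n)) : Prop :=
  ∃ R, PosInvR g R ∧ ∀ x ∈ S, ltR g (normNet x) R

/-- Functionally compact: an internal set generated by compacts which is sharply bounded. -/
def FCompact {n : ℕ} (S : Set (Idx → En n)) : Prop :=
  (∃ A : Idx → Set (En n), (∀ e, IsCompact (A e)) ∧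
    S = {x | ModerateV g x ∧ MemInternal g A x}) ∧ SharplyBounded g S

/-- Sharp ball of center `c` and radius `r`. -/
def BallG {n : ℕ} (c : Idx → En n) (r : Idx → ℝ) : Set (Idx → En n) :=
  {x | ModerateV g x ∧ ltR g (distNet x c) r}

/-- Pointwise sum of two sets of generalized points. -/
def sumSet {n : ℕ} (S T : Set (Idx → En n)) : Set (Idx → En n) :=
  {z | ∃ x ∈ S, ∃ y ∈ T, z = fun e => x e + y e}

/-- The generalized box `[−h,h]ⁿ` as a set of generalized points. -/
def BoxSet {n : ℕ} (h : Idx → ℝ) : Set (Idx → En n) :=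
  {x | ModerateV g x ∧ ∀ i : Fin n, leR g (fun e => |x e i|) h}

/-- All generalized (moderate) points. -/
def AllPts (n : ℕ) : Set (Idx → En n) := {x | ModerateV g x}

/- Derivatives of smooth maps on `ℝⁿ`. -/

noncomputable def pderivF {n : ℕ} {F : Type*} [NormedAddCommGroup F] [NormedSpace ℝ F]
    (i : Fin n) (f : En n → F) : En n → F :=
  fun x => fderiv ℝ f x (EuclideanSpace.single i 1)

/-- Iterated partial derivative `∂^α`. -/
noncomputable def pderivMulti {n : ℕ} {F : Type*} [NormedAddCommGroup F] [NormedSpace ℝ F]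
    (α : Fin n → ℕ) (f : En n → F) : En n → F :=
  (List.finRange n).foldr (fun i h => (pderivF i)^[α i] h) f

/-- The net `(f_ε)` of smooth functions defines a GSF on the set `X` of generalized points. -/
def IsGSFOn {n : ℕ} (X : Set (Idx → En n)) (f : Idx → En n → ℂ) : Prop :=
  (∀ e, ContDiff ℝ (⊤ : ℕ∞) (f e)) ∧
  ∀ x ∈ X, ∀ α : Fin n → ℕ,
    ModerateC g (fun e => pderivMulti α (f e) (x e)) ∧
    ∀ x' ∈ X, EquivV g x x' →
      EquivC g (fun e => pderivMulti α (f e) (x e)) (fun e => pderivMulti α (f e) (x' e))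

/-- Support of a GSF: sharp closure of the points where `|f(x)|` is positive invertible. -/
def suppNet {n : ℕ} (f : Idx → En n → ℂ) : Set (Idx → En n) :=
  SharpClosure g {x | ModerateV g x ∧ PosInvR g fun e => ‖f e (x e)‖}

/- Integration over hyperfinite boxes. -/

/-- The box `[−c,c]ⁿ ⊆ ℝⁿ`. -/
def box (n : ℕ) (c : ℝ) : Set (En n) := {v | ∀ i, |v i| ≤ c}

/-- ε-wise integral over the box `[−h_ε, h_ε]ⁿ`. -/
noncomputable def intBox {n : ℕ} (f : Idx → En n → ℂ) (h : Idx → ℝ) : Idx → ℂ :=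
  fun e => ∫ v in box n (h e), f e v

/-- Convolution of GSF, integrating over a box containing the support of the first factor. -/
noncomputable def convNet {n : ℕ} (f f' : Idx → En n → ℂ) (h : Idx → ℝ) :
    Idx → En n → ℂ :=
  fun e x => ∫ y in box n (h e), f e y * f' e (x - y)

/-- Dot product on `ℝⁿ`. -/
def dotP {n : ℕ} (x w : En n) : ℝ := ∑ i, x i * w i

/-- The hyperfinite Fourier transform `F_k(f)`. -/
noncomputable def FTnet {n : ℕ} (f : Idx → En n → ℂ) (k : Idx → ℝ) : Idx → En n → ℂ :=
  fun e w => ∫ x in box n (k e), f e x * Complex.exp (-(Complex.I * (dotP x w : ℂ)))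

/- One-dimensional versions. -/

def SharpClosure1 (S : Set (Idx → ℝ)) : Set (Idx → ℝ) :=
  {x | ModerateR g x ∧ ∀ r, PosInvR g r → ∃ y ∈ S, ltR g (fun e => |y e - x e|) r}

def supp1 (ψ : Idx → ℝ → ℂ) : Set (Idx → ℝ) :=
  SharpClosure1 g {x | ModerateR g x ∧ PosInvR g fun e => ‖ψ e (x e)‖}

def IsGSF1 (X : Set (Idx → ℝ)) (ψ : Idx → ℝ → ℂ) : Prop :=
  (∀ e, ContDiff ℝ (⊤ : ℕ∞) (ψ e)) ∧
  ∀ x ∈ X, ∀ j : ℕ,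
    ModerateC g (fun e => iteratedDeriv j (ψ e) (x e)) ∧
    ∀ x' ∈ X, EquivR g x x' →
      EquivC g (fun e => iteratedDeriv j (ψ e) (x e))
        (fun e => iteratedDeriv j (ψ e) (x' e))

/-- One-dimensional hyperfinite Fourier transform over `[−k,k]`. -/
noncomputable def FT1 (ψ : Idx → ℝ → ℂ) (k : Idx → ℝ) : Idx → ℝ → ℂ :=
  fun e w => ∫ x in Set.Icc (-(k e)) (k e), ψ e x * Complex.exp (-(Complex.I * ((x * w : ℝ) : ℂ)))


section Aux

open Metric

private def idx1 : Idx := ⟨1, one_pos, le_refl 1⟩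

private lemma ev_mono {P Q : Idx → Prop} (h : Ev P) (h2 : ∀ e, P e → Q e) : Ev Q := by
  obtain ⟨a, ha⟩ := h
  exact ⟨a, fun e he => h2 e (ha e he)⟩

private lemma ev_and {P Q : Idx → Prop} (hP : Ev P) (hQ : Ev Q) :
    Ev fun e => P e ∧ Q e := by
  obtain ⟨a, ha⟩ := hP
  obtain ⟨b, hb⟩ := hQ
  refine ⟨⟨min a.1 b.1, lt_min a.2.1 b.2.1, le_trans (min_le_left _ _) a.2.2⟩, fun e he => ?_⟩
  exact ⟨ha e (le_trans he (min_le_left _ _)), hb e (le_trans he (min_le_right _ _))⟩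

private lemma ev_small (δ : ℝ) (hδ : 0 < δ) : Ev fun e => e.1 ≤ δ :=
  ⟨⟨min δ 1, lt_min hδ one_pos, min_le_right _ _⟩, fun e he => le_trans he (min_le_left _ _)⟩

private lemma ev_rho (g : Gauge) (δ : ℝ) (hδ : 0 < δ) : Ev fun e => g.ρ e ≤ δ :=
  ev_mono (g.to_zero δ hδ) (fun _ h => le_of_lt h)

private lemma posInv_rhoPow (g : Gauge) (m : ℕ) : PosInvR g fun e => g.ρ e ^ m := by
  constructor
  · refine ⟨fun _ => 0, ?_, ?_⟩
    · intro k
      exact ⟨idx1, fun e _ => by simpa using pow_nonneg (g.pos e).le k⟩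
    · refine ⟨idx1, fun e _ => ?_⟩
      show (0:ℝ) ≤ g.ρ e ^ m + 0
      have := pow_nonneg (g.pos e).le m
      linarith
  · refine ⟨fun e => (g.ρ e)⁻¹ ^ m, ⟨m, ⟨idx1, fun e _ => ?_⟩⟩, ?_⟩
    · show |(g.ρ e)⁻¹ ^ m| ≤ (g.ρ e)⁻¹ ^ m
      exact le_of_eq (abs_of_pos (pow_pos (inv_pos.2 (g.pos e)) m))
    · intro k
      refine ⟨idx1, fun e _ => ?_⟩
      show |(g.ρ e ^ m - 0) * (g.ρ e)⁻¹ ^ m - 1| ≤ g.ρ e ^ k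
      rw [sub_zero, ← mul_pow, mul_inv_cancel₀ (g.pos e).ne', one_pow, sub_self, abs_zero]
      exact pow_nonneg (g.pos e).le k

private lemma ltR_sub_pow (g : Gauge) (d r : Idx → ℝ) (h : ltR g d r) :
    ∃ N : ℕ, Ev fun e => d e ≤ r e - g.ρ e ^ N := by
  obtain ⟨⟨z, hz, hle⟩, w, ⟨N, hwN⟩, hw1⟩ := h
  refine ⟨N + 2, ?_⟩
  refine ev_mono (ev_and hle (ev_and hwN (ev_and (hz (N+2))
    (ev_and (hw1 1) (ev_rho g (1/2) (by norm_num)))))) ?_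
  rintro e ⟨h1, h2, h3, h4, h5⟩
  have hρpos := g.pos e
  have hρN : (0:ℝ) < g.ρ e ^ N := pow_pos hρpos N
  rw [sub_zero] at h3
  have h4'' : |(r e - d e) * w e - 1| ≤ g.ρ e := by simpa using h4
  have h4' : 1 - g.ρ e ≤ |(r e - d e) * w e| := by
    have habs2 := abs_sub_abs_le_abs_sub (1:ℝ) ((r e - d e) * w e)
    rw [abs_one, abs_sub_comm] at habs2
    linarith
  have hw' : |w e| ≤ (g.ρ e ^ N)⁻¹ := by rw [← inv_pow]; exact h2
  have habs : (1 - g.ρ e) * g.ρ e ^ N ≤ |r e - d e| := by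
    have hub : |(r e - d e) * w e| ≤ |r e - d e| * (g.ρ e ^ N)⁻¹ := by
      rw [abs_mul]
      exact mul_le_mul_of_nonneg_left hw' (abs_nonneg _)
    have h6 : 1 - g.ρ e ≤ |r e - d e| * (g.ρ e ^ N)⁻¹ := le_trans h4' hub
    have h7 := mul_le_mul_of_nonneg_right h6 hρN.le
    rwa [mul_assoc, inv_mul_cancel₀ hρN.ne', mul_one] at h7
  have hNN2 : g.ρ e ^ (N+2) = g.ρ e ^ N * (g.ρ e * g.ρ e) := by
    rw [pow_succ, pow_succ, mul_assoc]
  have hρ2 : g.ρ e * g.ρ e ≤ (1/2) * (1/2) := mul_le_mul h5 h5 hρpos.le (by norm_num)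
  have hD : g.ρ e ^ N * (g.ρ e * g.ρ e) ≤ g.ρ e ^ N * ((1/2) * (1/2)) :=
    mul_le_mul_of_nonneg_left hρ2 hρN.le
  have hhalf : (1/2 : ℝ) * g.ρ e ^ N ≤ (1 - g.ρ e) * g.ρ e ^ N :=
    mul_le_mul_of_nonneg_right (by linarith) hρN.le
  rcases abs_cases (r e - d e) with ⟨heq, _⟩ | ⟨heq, _⟩
  · rw [heq] at habs
    linarith
  · rw [heq] at habs
    have hz' := le_trans (le_abs_self (z e)) h3
    linarith

private lemma strongMem_of_ball {n : ℕ} (g : Gauge) (A : Idx → Set (En n)) (x : Idx → En n)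
    (h : ∃ m : ℕ, Ev fun e => Metric.closedBall (x e) (g.ρ e ^ m) ⊆ A e) :
    StrongMem g A x := by
  obtain ⟨m, hm⟩ := h
  intro x' hx'
  refine ev_mono (ev_and hm (hx' m)) ?_
  rintro e ⟨hb, hd⟩
  apply hb
  rw [Metric.mem_closedBall, dist_eq_norm, norm_sub_rev]
  exact hd

private lemma ball_of_strongMem {n : ℕ} (g : Gauge) (A : Idx → Set (En n)) (x : Idx → En n)
    (h : StrongMem g A x) :
    ∃ m : ℕ, Ev fun e => Metric.closedBall (x e) (g.ρ e ^ m) ⊆ A e := by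
  classical
  by_contra hc
  push_neg at hc
  have hc' : ∀ (m : ℕ) (t : Idx), ∃ e : Idx, e.1 ≤ t.1 ∧
      ∃ v, dist v (x e) ≤ g.ρ e ^ m ∧ v ∉ A e := by
    intro m t
    have h1 := hc m
    unfold Ev at h1
    push_neg at h1
    obtain ⟨e, he, hns⟩ := h1 t
    rw [Set.not_subset] at hns
    obtain ⟨v, hv1, hv2⟩ := hns
    exact ⟨e, he, v, Metric.mem_closedBall.1 hv1, hv2⟩
  have step : ∀ (m : ℕ) (prev : Idx), ∃ e : Idx, e.1 < prev.1 ∧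
      (e.1 ≤ 1/((m:ℝ)+1) ∧ ∃ v, dist v (x e) ≤ g.ρ e ^ m ∧ v ∉ A e) := by
    intro m prev
    have hm1 : (0:ℝ) < 1/((m:ℝ)+1) := by positivity
    have hpos : (0:ℝ) < min (prev.1/2) (1/((m:ℝ)+1)) := lt_min (by linarith [prev.2.1]) hm1
    have hle1 : min (prev.1/2) (1/((m:ℝ)+1)) ≤ 1 :=
      le_trans (min_le_left _ _) (by linarith [prev.2.2, prev.2.1])
    obtain ⟨e, he, hv⟩ := hc' m ⟨_, hpos, hle1⟩
    refine ⟨e, lt_of_le_of_lt (le_trans he (min_le_left _ _)) (by linarith [prev.2.1]),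
      le_trans he (min_le_right _ _), hv⟩
  let f : ℕ → Idx := fun m => Nat.rec (motive := fun _ => Idx)
    (step 0 idx1).choose (fun k ih => (step (k+1) ih).choose) m
  have hQ : ∀ k, (f k).1 ≤ 1/((k:ℝ)+1) ∧
      ∃ v, dist v (x (f k)) ≤ g.ρ (f k) ^ k ∧ v ∉ A (f k) := by
    intro k
    cases k with
    | zero => exact (step 0 idx1).choose_spec.2
    | succ k => exact (step (k+1) (f k)).choose_spec.2
  have hdec : ∀ k, (f (k+1)).1 < (f k).1 := fun k => (step (k+1) (f k)).choose_spec.1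
  have hanti : StrictAnti fun k => (f k).1 := strictAnti_nat_of_succ_lt hdec
  let bad : ℕ → En n := fun k => (hQ k).2.choose
  have hbad : ∀ k, dist (bad k) (x (f k)) ≤ g.ρ (f k) ^ k ∧ bad k ∉ A (f k) :=
    fun k => (hQ k).2.choose_spec
  let x' : Idx → En n := fun e => @dite _ (∃ k, e = f k) (Classical.dec _)
    (fun hk => bad hk.choose) (fun _ => x e)
  have hx'body : ∀ e, x' e = @dite _ (∃ k, e = f k) (Classical.dec _)
      (fun hk => bad hk.choose) (fun _ => x e) := fun _ => rfl
  have hx'eq : EquivV g x x' := by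
    intro m
    refine ⟨f m, fun e he => ?_⟩
    rcases Classical.em (∃ k, e = f k) with hk | hk
    · have hkc : e = f hk.choose := hk.choose_spec
      have hxe : x' e = bad hk.choose := by rw [hx'body e, dif_pos hk]
      have hmk : m ≤ hk.choose := by
        by_contra hlt
        push_neg at hlt
        have hlt2 := hanti hlt
        simp only at hlt2
        rw [← hkc] at hlt2
        exact absurd he (not_le.2 hlt2)
      have hb := (hbad hk.choose).1
      rw [← hkc] at hb
      show ‖x e - x' e‖ ≤ g.ρ e ^ m
      rw [hxe, ← dist_eq_norm, dist_comm]
      exact le_trans hb (pow_le_pow_of_le_one (g.pos e).le (g.le_one e) hmk)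
    · show ‖x e - x' e‖ ≤ g.ρ e ^ m
      rw [show x' e = x e by rw [hx'body e, dif_neg hk]]
      simp only [sub_self, norm_zero]
      exact pow_nonneg (g.pos e).le m
  have hnot : ¬ Ev fun e => x' e ∈ A e := by
    rintro ⟨e0, he0⟩
    obtain ⟨k, hk⟩ := exists_nat_one_div_lt e0.2.1
    have hfk : (f k).1 ≤ e0.1 := le_trans (hQ k).1 (le_of_lt hk)
    have hmem : x' (f k) ∈ A (f k) := he0 (f k) hfk
    have hex : ∃ k', f k = f k' := ⟨k, rfl⟩
    rw [show x' (f k) = bad hex.choose by rw [hx'body (f k), dif_pos hex]] at hmem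
    have hb2 := (hbad hex.choose).2
    rw [← hex.choose_spec] at hb2
    exact hb2 hmem
  exact hnot (h x' hx'eq)

private lemma mem_of_Q {n : ℕ} (g : Gauge) (A : Idx → Set (En n)) (x : Idx → En n)
    (h : ∀ m : ℕ, Ev fun e => ∃ a ∈ A e, ‖x e - a‖ ≤ g.ρ e ^ m) :
    MemInternal g A x := by
  classical
  set x' : Idx → En n := fun e =>
    if hc : ∃ a ∈ A e, dist (x e) a < Metric.infDist (x e) (A e) + g.ρ e ^ ⌈(e.1)⁻¹⌉₊
    then hc.choose else x e with hx'def
  have key : ∀ e, (A e).Nonempty →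
      x' e ∈ A e ∧ dist (x e) (x' e) < Metric.infDist (x e) (A e) + g.ρ e ^ ⌈(e.1)⁻¹⌉₊ := by
    intro e hne
    have hc : ∃ a ∈ A e, dist (x e) a < Metric.infDist (x e) (A e) + g.ρ e ^ ⌈(e.1)⁻¹⌉₊ :=
      (Metric.infDist_lt_iff hne).1 (lt_add_of_pos_right _ (pow_pos (g.pos e) _))
    have hxe : x' e = hc.choose := by
      simp only [hx'def]
      rw [dif_pos hc]
    rw [hxe]
    exact ⟨hc.choose_spec.1, hc.choose_spec.2⟩
  refine ⟨x', ?_, ?_⟩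
  · intro m
    refine ev_mono (ev_and (h (m+1)) (ev_and (ev_small (1/((m:ℝ)+1)) (by positivity))
      (ev_rho g (1/2) (by norm_num)))) ?_
    rintro e ⟨⟨a, ha, hxa⟩, hsmall, hρ⟩
    have hρpos := g.pos e
    obtain ⟨hmem, hdist⟩ := key e ⟨a, ha⟩
    have hinf : Metric.infDist (x e) (A e) ≤ g.ρ e ^ (m+1) :=
      le_trans (Metric.infDist_le_dist_of_mem ha) (by rw [dist_eq_norm]; exact hxa)
    have hm2 : (0:ℝ) < (m:ℝ)+1 := by positivity
    have h5 : ((m:ℝ)+1) * e.1 ≤ 1 := by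
      have := mul_le_mul_of_nonneg_left hsmall hm2.le
      rwa [mul_one_div, div_self hm2.ne'] at this
    have h6 : ((m:ℝ)+1) ≤ (e.1)⁻¹ := by
      rw [inv_eq_one_div, le_div_iff₀ e.2.1]
      exact h5
    have hceil : m + 1 ≤ ⌈(e.1)⁻¹⌉₊ := by
      have : (m:ℝ) < (e.1)⁻¹ := by linarith
      exact Nat.lt_ceil.2 this
    have hδle : g.ρ e ^ ⌈(e.1)⁻¹⌉₊ ≤ g.ρ e ^ (m+1) :=
      pow_le_pow_of_le_one hρpos.le (g.le_one e) hceil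
    have hpows : g.ρ e ^ (m+1) = g.ρ e ^ m * g.ρ e := pow_succ _ _
    have hC : g.ρ e ^ m * g.ρ e ≤ g.ρ e ^ m * (1/2) :=
      mul_le_mul_of_nonneg_left hρ (pow_nonneg hρpos.le m)
    rw [← dist_eq_norm]
    linarith
  · refine ev_mono (h 0) ?_
    rintro e ⟨a, ha, -⟩
    exact (key e ⟨a, ha⟩).1

end Aux

/-- internal sets are sharply closed, strongly internal sets are sharply open;
`[A_ε] = [cl(A_ε)]` and `⟨A_ε⟩ = ⟨int(A_ε)⟩`. -/
theorem internal_closed_stronglyInternal_open (g : Gauge) {n : ℕ} (A : Idx → Set (En n)) :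
    SharpClosed g {x | ModerateV g x ∧ MemInternal g A x} ∧
    SharpOpen g {x | ModerateV g x ∧ StrongMem g A x} ∧
    {x | ModerateV g x ∧ MemInternal g A x}
      = {x | ModerateV g x ∧ MemInternal g (fun e => closure (A e)) x} ∧
    {x | ModerateV g x ∧ StrongMem g A x}
      = {x | ModerateV g x ∧ StrongMem g (fun e => interior (A e)) x} := by
  classical
  refine ⟨?_, ?_, ?_, ?_⟩
  · -- internal sets are closed
    intro x hx hxS
    have hxm : ¬ MemInternal g A x := fun h => hxS ⟨hx, h⟩
    have hQ : ¬ ∀ m : ℕ, Ev fun e => ∃ a ∈ A e, ‖x e - a‖ ≤ g.ρ e ^ m :=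
      fun h => hxm (mem_of_Q g A x h)
    push_neg at hQ
    obtain ⟨m0, hm0⟩ := hQ
    refine ⟨fun e => g.ρ e ^ (m0+1), posInv_rhoPow g (m0+1), fun y hy hylt hyS => ?_⟩
    obtain ⟨-, y', hyeq, hyev⟩ := hyS
    obtain ⟨N, hN⟩ := ltR_sub_pow g _ _ hylt
    apply hm0
    refine ev_mono (ev_and hN (ev_and (hyeq (m0+2)) (ev_and hyev
      (ev_rho g (1/2) (by norm_num))))) ?_
    rintro e ⟨h1, h2, h3, h5⟩
    have h1' : ‖y e - x e‖ ≤ g.ρ e ^ (m0+1) - g.ρ e ^ N := h1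
    have hρpos := g.pos e
    refine ⟨y' e, h3, ?_⟩
    have tri := dist_triangle (x e) (y e) (y' e)
    simp only [dist_eq_norm] at tri
    have hxy : ‖x e - y e‖ = ‖y e - x e‖ := norm_sub_rev _ _
    have hNpos : (0:ℝ) ≤ g.ρ e ^ N := pow_nonneg hρpos.le N
    have hA1 : g.ρ e ^ (m0+1) = g.ρ e ^ m0 * g.ρ e := pow_succ _ _
    have hA2 : g.ρ e ^ (m0+2) = g.ρ e ^ m0 * (g.ρ e * g.ρ e) := by
      rw [pow_succ, pow_succ, mul_assoc]
    have hρ2 : g.ρ e * g.ρ e ≤ (1/2) * (1/2) := mul_le_mul h5 h5 hρpos.le (by norm_num)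
    have hC : g.ρ e ^ m0 * g.ρ e ≤ g.ρ e ^ m0 * (1/2) :=
      mul_le_mul_of_nonneg_left h5 (pow_nonneg hρpos.le m0)
    have hD : g.ρ e ^ m0 * (g.ρ e * g.ρ e) ≤ g.ρ e ^ m0 * ((1/2) * (1/2)) :=
      mul_le_mul_of_nonneg_left hρ2 (pow_nonneg hρpos.le m0)
    have hm0nn : (0:ℝ) ≤ g.ρ e ^ m0 := pow_nonneg hρpos.le m0
    linarith
  · -- strongly internal sets are open
    intro x hx hxS
    obtain ⟨-, hsm⟩ := hxS
    obtain ⟨m, hball⟩ := ball_of_strongMem g A x hsm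
    refine ⟨fun e => g.ρ e ^ m, posInv_rhoPow g m, fun y hy hylt => ⟨hy, ?_⟩⟩
    obtain ⟨N, hN⟩ := ltR_sub_pow g _ _ hylt
    intro y' hy'
    refine ev_mono (ev_and hN (ev_and (hy' (N+1)) hball)) ?_
    rintro e ⟨hd, hyy', hb⟩
    have hd' : ‖y e - x e‖ ≤ g.ρ e ^ m - g.ρ e ^ N := hd
    apply hb
    rw [Metric.mem_closedBall, dist_eq_norm]
    have tri := dist_triangle (y' e) (y e) (x e)
    simp only [dist_eq_norm] at tri
    have h1 : ‖y' e - y e‖ = ‖y e - y' e‖ := norm_sub_rev _ _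
    have h2 : g.ρ e ^ (N+1) ≤ g.ρ e ^ N :=
      pow_le_pow_of_le_one (g.pos e).le (g.le_one e) (Nat.le_succ N)
    linarith
  · -- [A] = [cl A]
    ext x
    simp only [Set.mem_setOf_eq]
    constructor
    · rintro ⟨hx, x', heq, hev⟩
      exact ⟨hx, x', heq, ev_mono hev (fun e h => subset_closure h)⟩
    · rintro ⟨hx, x', heq, hev⟩
      refine ⟨hx, mem_of_Q g A x ?_⟩
      intro m
      refine ev_mono (ev_and (heq (m+1)) (ev_and hev (ev_rho g (1/2) (by norm_num)))) ?_
      rintro e ⟨h1, h2, h5⟩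
      have hρpos := g.pos e
      obtain ⟨a, ha, hda⟩ := Metric.mem_closure_iff.1 h2 (g.ρ e ^ (m+1))
        (pow_pos hρpos (m+1))
      refine ⟨a, ha, ?_⟩
      have tri := dist_triangle (x e) (x' e) a
      rw [dist_eq_norm] at tri
      have h1' : dist (x e) (x' e) = ‖x e - x' e‖ := dist_eq_norm _ _
      have hA1 : g.ρ e ^ (m+1) = g.ρ e ^ m * g.ρ e := pow_succ _ _
      have hC : g.ρ e ^ m * g.ρ e ≤ g.ρ e ^ m * (1/2) :=
        mul_le_mul_of_nonneg_left h5 (pow_nonneg hρpos.le m)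
      linarith
  · -- ⟨A⟩ = ⟨int A⟩
    ext x
    simp only [Set.mem_setOf_eq]
    constructor
    · rintro ⟨hx, hsm⟩
      refine ⟨hx, ?_⟩
      obtain ⟨m, hball⟩ := ball_of_strongMem g A x hsm
      apply strongMem_of_ball g _ x ⟨m+1, ?_⟩
      refine ev_mono (ev_and hball (g.to_zero 1 one_pos)) ?_
      rintro e ⟨hb, hρ1⟩
      have hsub : Metric.ball (x e) (g.ρ e ^ m) ⊆ interior (A e) :=
        interior_maximal (subset_trans Metric.ball_subset_closedBall hb) Metric.isOpen_ball
      refine subset_trans (Metric.closedBall_subset_ball ?_) hsub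
      have hlt := mul_lt_mul_of_pos_left hρ1 (pow_pos (g.pos e) m)
      rw [mul_one] at hlt
      rw [pow_succ]
      exact hlt
    · rintro ⟨hx, hsm⟩
      exact ⟨hx, fun x' hx' => ev_mono (hsm x' hx') (fun e h => interior_subset h)⟩


end

end HFT
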